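/- Let P be a poset on [n], E an equivalence relation on I(P) with dual relation E*, 𝔽_q a finite field, and χ a nontrivial additive character of 𝔽_q. Let I, J be order ideals of P, and assume that for every order ideal K with (K,J) ∈ E one has |M(K^c)| = |M(J^c)| and |(K^c)_M| = |(J^c)_M|. Then for every u ∈ S_I: Σ_{v ∈ S_{J̄^c,E*}} χ(u·v) = (q−1)^{|M(J^c)|} q^{|(J^c)_M|} · Σ_{K : (K,J) ∈ E, I_M ∩ K^c = ∅} (−1/(q−1))^{|I ∩ K^c|}. (Proposition 3.8(i): the entry p_{J̄^c,Ī} of the matrix P_E.) -/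

import Mathlib

open scoped BigOperators
open Finset

noncomputable section
open scoped Classical

/-- `I ⊆ [n]` is an order ideal with respect to the order relation `le`. -/
def IsIdeal {n : ℕ} (le : Fin n → Fin n → Prop) (I : Finset (Fin n)) : Prop :=
  ∀ a ∈ I, ∀ b, le b a → b ∈ I

/-- `⟨X⟩_P` : the smallest order ideal (w.r.t. `le`) containing `X`. -/
def idealCl {n : ℕ} (le : Fin n → Fin n → Prop) (X : Finset (Fin n)) : Finset (Fin n) :=
  Finset.univ.filter fun b => ∃ a ∈ X, le b a

/-- `M(A)` : the set of maximal elements of `A` with respect to `le`. -/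
def maxSet {n : ℕ} (le : Fin n → Fin n → Prop) (A : Finset (Fin n)) : Finset (Fin n) :=
  A.filter fun a => ∀ b ∈ A, le a b → b = a

/-- `E` is an equivalence relation on the set of order ideals of the poset `le`. -/
def EqvOnIdeals {n : ℕ} (le : Fin n → Fin n → Prop)
    (E : Finset (Fin n) → Finset (Fin n) → Prop) : Prop :=
  (∀ I J, E I J → IsIdeal le I ∧ IsIdeal le J) ∧
  (∀ I, IsIdeal le I → E I I) ∧
  (∀ I J, E I J → E J I) ∧
  (∀ I J K, E I J → E J K → E I K)

/-- support of a vector -/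
def supp {n : ℕ} {F : Type} [Field F] [Fintype F] (v : Fin n → F) : Finset (Fin n) :=
  Finset.univ.filter fun i => v i ≠ 0

/-- standard dot product -/
def dot {n : ℕ} {F : Type} [Field F] [Fintype F] (u v : Fin n → F) : F := ∑ i, u i * v i

/-- the sphere `S_I = {v : ⟨supp v⟩_P = I}` -/
def sph {n : ℕ} (F : Type) [Field F] [Fintype F] (le : Fin n → Fin n → Prop)
    (I : Finset (Fin n)) : Finset (Fin n → F) :=
  Finset.univ.filter fun v => idealCl le (supp v) = I

/-- the dual sphere `S_{J^c} = {v : ⟨supp v⟩_{P*} = J^c}` -/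
def sphD {n : ℕ} (F : Type) [Field F] [Fintype F] (le : Fin n → Fin n → Prop)
    (J : Finset (Fin n)) : Finset (Fin n → F) :=
  Finset.univ.filter fun v => idealCl (fun a b => le b a) (supp v) = Jᶜ

/-- the `E`-sphere `S_{Ī,E} = {v : (⟨supp v⟩_P, I) ∈ E}` -/
def sphE {n : ℕ} (F : Type) [Field F] [Fintype F] (le : Fin n → Fin n → Prop)
    (E : Finset (Fin n) → Finset (Fin n) → Prop) (I : Finset (Fin n)) :
    Finset (Fin n → F) :=
  Finset.univ.filter fun v => E (idealCl le (supp v)) I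

/-- the `E*`-sphere `S_{J̄^c,E*} = {v : ⟨supp v⟩_{P*} = K^c for some ideal K with (K,J) ∈ E}` -/
def sphED {n : ℕ} (F : Type) [Field F] [Fintype F] (le : Fin n → Fin n → Prop)
    (E : Finset (Fin n) → Finset (Fin n) → Prop) (J : Finset (Fin n)) :
    Finset (Fin n → F) :=
  Finset.univ.filter fun v =>
    ∃ K, IsIdeal le K ∧ E K J ∧ idealCl (fun a b => le b a) (supp v) = Kᶜ

/-- the dual code `C^⊥` -/
def dualCode {n : ℕ} {F : Type} [Field F] [Fintype F] (C : Submodule F (Fin n → F)) :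
    Submodule F (Fin n → F) where
  carrier := {u | ∀ v ∈ C, dot u v = 0}
  zero_mem' := by intro v hv; simp [dot]
  add_mem' := by
    intro a b ha hb v hv
    have h1 := ha v hv
    have h2 := hb v hv
    simp only [dot, Pi.add_apply] at *
    simp [add_mul, Finset.sum_add_distrib, h1, h2]
  smul_mem' := by
    intro c a ha v hv
    have h1 := ha v hv
    simp only [dot, Pi.smul_apply, smul_eq_mul] at *
    simp [mul_assoc, ← Finset.mul_sum, h1]

/-- `A_{Ī,E}(C) = |C ∩ S_{Ī,E}|` -/
def AE {n : ℕ} {F : Type} [Field F] [Fintype F] (le : Fin n → Fin n → Prop)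
    (E : Finset (Fin n) → Finset (Fin n) → Prop)
    (C : Submodule F (Fin n → F)) (I : Finset (Fin n)) : ℕ :=
  ((sphE F le E I).filter fun v => v ∈ C).card

/-- `A_{J̄^c,E*}(D) = |D ∩ S_{J̄^c,E*}|` -/
def AED {n : ℕ} {F : Type} [Field F] [Fintype F] (le : Fin n → Fin n → Prop)
    (E : Finset (Fin n) → Finset (Fin n) → Prop)
    (D : Submodule F (Fin n → F)) (J : Finset (Fin n)) : ℕ :=
  ((sphED F le E J).filter fun v => v ∈ D).card

/-- `E` is a MacWilliams-type equivalence relation (w.r.t. the field `F`). -/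
def IsMacWilliamsType {n : ℕ} (F : Type) [Field F] [Fintype F]
    (le : Fin n → Fin n → Prop) (E : Finset (Fin n) → Finset (Fin n) → Prop) : Prop :=
  ∀ C₁ C₂ : Submodule F (Fin n → F),
    (∀ I, IsIdeal le I → AE le E C₁ I = AE le E C₂ I) →
    ∀ J, IsIdeal le J → AED le E (dualCode C₁) J = AED le E (dualCode C₂) J

/-- a hierarchical poset (ordinal sum of antichains) -/
def IsHierarchical {n : ℕ} (le : Fin n → Fin n → Prop) : Prop :=
  ∃ l : Fin n → ℕ, ∀ i j, (le i j ∧ i ≠ j) ↔ l i < l j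

/-- `σ` is an automorphism of the poset `le`. -/
def IsAut {n : ℕ} (le : Fin n → Fin n → Prop) (σ : Equiv.Perm (Fin n)) : Prop :=
  ∀ x y, le x y ↔ le (σ x) (σ y)

/-- `A` and `B` are order-isomorphic with the induced orders. -/
def OrdIso {n : ℕ} (le : Fin n → Fin n → Prop) (A B : Finset (Fin n)) : Prop :=
  ∃ e : {x // x ∈ A} ≃ {x // x ∈ B}, ∀ a b : {x // x ∈ A}, le ↑a ↑b ↔ le ↑(e a) ↑(e b)

/-!
The set `S_{J̄^c,E*}` is the disjoint union of the dual spheres `S_{K^c}` over the ideals `K`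
with `(K, J) ∈ E`, and each dual sphere is the box `{v : M(K^c) ⊆ supp v ⊆ K^c}`, a product set.
So the character sum over `S_{K^c}` factorises over the coordinates: a coordinate of `M(K^c)`
contributes `q - 1` or `-1`, one of `(K^c)_M` contributes `q` or `0`, and one outside `K^c`
contributes `1`, according as `u_i` vanishes or not. The sum is therefore zero unless `supp u`
avoids `(K^c)_M`; for `u ∈ S_I` this happens exactly when `I_M ∩ K^c = ∅`, and then
`M(K^c) ∩ supp u = I ∩ K^c`.
-/

section Poset

variable {n : ℕ} {le : Fin n → Fin n → Prop}

lemma mem_idealCl {X : Finset (Fin n)} {b : Fin n} :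
    b ∈ idealCl le X ↔ ∃ a ∈ X, le b a := by
  simp [idealCl]

lemma mem_maxSet {A : Finset (Fin n)} {a : Fin n} :
    a ∈ maxSet le A ↔ a ∈ A ∧ ∀ b ∈ A, le a b → b = a := by
  simp [maxSet]

lemma maxSet_subset (A : Finset (Fin n)) : maxSet le A ⊆ A :=
  filter_subset _ _

lemma IsIdeal.mem_compl_of_le {K : Finset (Fin n)} (hK : IsIdeal le K) {a b : Fin n}
    (ha : a ∈ Kᶜ) (hab : le a b) : b ∈ Kᶜ :=
  mem_compl.2 fun hb => mem_compl.1 ha (hK b hb a hab)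

lemma mem_maxSet_of_sdiff_inter_eq_empty {I K : Finset (Fin n)}
    (hIK : (I \ maxSet le I) ∩ Kᶜ = ∅) {x : Fin n} (hxI : x ∈ I) (hxK : x ∈ Kᶜ) :
    x ∈ maxSet le I := by
  by_contra hx
  exact notMem_empty x (hIK ▸ mem_inter.2 ⟨mem_sdiff.2 ⟨hxI, hx⟩, hxK⟩)

lemma mem_maxSet_swap_of_sdiff_inter_eq_empty {I K : Finset (Fin n)} (hI : IsIdeal le I)
    (hIK : (I \ maxSet le I) ∩ Kᶜ = ∅) {x : Fin n} (hxI : x ∈ I) (hxK : x ∈ Kᶜ) :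
    x ∈ maxSet (fun a b => le b a) Kᶜ :=
  mem_maxSet.2 ⟨hxK, fun y hyK hyx =>
    ((mem_maxSet.1 (mem_maxSet_of_sdiff_inter_eq_empty hIK (hI x hxI y hyx) hyK)).2
      x hxI hyx).symm⟩

variable [IsPartialOrder (Fin n) le]

lemma subset_idealCl (X : Finset (Fin n)) : X ⊆ idealCl le X :=
  fun a ha => mem_idealCl.2 ⟨a, ha, refl_of le a⟩

lemma isIdeal_idealCl (X : Finset (Fin n)) : IsIdeal le (idealCl le X) := by
  intro a ha b hba
  obtain ⟨c, hc, hac⟩ := mem_idealCl.1 ha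
  exact mem_idealCl.2 ⟨c, hc, trans_of le hba hac⟩

lemma exists_mem_maxSet_swap_le {s : Finset (Fin n)} {b : Fin n} (hb : b ∈ s) :
    ∃ m ∈ maxSet (fun a b => le b a) s, le m b := by
  let lt : Fin n → Fin n → Prop := fun a b => le a b ∧ a ≠ b
  have lt_trans : IsTrans (Fin n) lt := ⟨fun a b c hab hbc =>
    ⟨trans_of le hab.1 hbc.1, fun hac => hbc.2 (antisymm hbc.1 (hac ▸ hab.1))⟩⟩
  have lt_irrefl : Std.Irrefl lt := ⟨fun a h => h.2 rfl⟩
  obtain ⟨m, ⟨hms, hmb⟩, hmin⟩ := (Finite.wellFounded_of_trans_of_irrefl lt).has_min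
    {x | x ∈ s ∧ le x b} ⟨b, hb, refl_of le b⟩
  refine ⟨m, mem_maxSet.2 ⟨hms, fun x hx hxm => ?_⟩, hmb⟩
  by_contra hne
  exact hmin x ⟨hx, trans_of le hxm hmb⟩ ⟨hxm, hne⟩

lemma maxSet_subset_of_idealCl_eq {X I : Finset (Fin n)} (hX : idealCl le X = I) :
    maxSet le I ⊆ X := by
  intro x hx
  obtain ⟨hxI, hxmax⟩ := mem_maxSet.1 hx
  obtain ⟨a, haX, hxa⟩ := mem_idealCl.1 (hX ▸ hxI)
  rwa [← hxmax a (hX ▸ subset_idealCl X haX) hxa]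

lemma idealCl_swap_eq_compl_iff {K X : Finset (Fin n)} (hK : IsIdeal le K) :
    idealCl (fun a b => le b a) X = Kᶜ ↔
      maxSet (fun a b => le b a) Kᶜ ⊆ X ∧ X ⊆ Kᶜ := by
  constructor
  · intro hX
    refine ⟨fun m hm => ?_, hX ▸ subset_idealCl X⟩
    obtain ⟨hmK, hmmin⟩ := mem_maxSet.1 hm
    obtain ⟨a, haX, ham⟩ := mem_idealCl.1 (hX ▸ hmK)
    rwa [← hmmin a (hX ▸ subset_idealCl X haX) ham]
  · rintro ⟨hMX, hXK⟩
    ext b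
    refine ⟨fun hb => ?_, fun hb => ?_⟩
    · obtain ⟨a, haX, hab⟩ := mem_idealCl.1 hb
      exact hK.mem_compl_of_le (hXK haX) hab
    · obtain ⟨m, hm, hmb⟩ := exists_mem_maxSet_swap_le (le := le) hb
      exact mem_idealCl.2 ⟨m, hMX hm, hmb⟩

lemma disjoint_sdiff_maxSet_swap_iff {X I K : Finset (Fin n)} (hX : idealCl le X = I)
    (hK : IsIdeal le K) :
    Disjoint X (Kᶜ \ maxSet (fun a b => le b a) Kᶜ) ↔ (I \ maxSet le I) ∩ Kᶜ = ∅ := by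
  constructor
  · intro hdisj
    refine eq_empty_of_forall_notMem fun x hx => ?_
    obtain ⟨⟨hxI, hxmax⟩, hxK⟩ : (x ∈ I ∧ x ∉ maxSet le I) ∧ x ∈ Kᶜ := by
      simpa only [mem_inter, mem_sdiff] using hx
    obtain ⟨b, hbI, hxb, hbx⟩ : ∃ b ∈ I, le x b ∧ b ≠ x := by
      by_contra! h
      exact hxmax (mem_maxSet.2 ⟨hxI, h⟩)
    obtain ⟨a, haX, hba⟩ := mem_idealCl.1 (hX ▸ hbI)
    have haK : a ∈ Kᶜ := hK.mem_compl_of_le (hK.mem_compl_of_le hxK hxb) hba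
    refine disjoint_left.1 hdisj haX (mem_sdiff.2 ⟨haK, fun ha => hbx ?_⟩)
    have hxa : x = a := (mem_maxSet.1 ha).2 x hxK (trans_of le hxb hba)
    subst hxa
    exact antisymm (r := le) hba hxb
  · intro hIK
    refine disjoint_left.2 fun x hxX hx => (mem_sdiff.1 hx).2 ?_
    exact mem_maxSet_swap_of_sdiff_inter_eq_empty (hX ▸ isIdeal_idealCl X) hIK
      (hX ▸ subset_idealCl X hxX) (mem_sdiff.1 hx).1

lemma maxSet_swap_inter_eq {X I K : Finset (Fin n)} (hX : idealCl le X = I)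
    (hIK : (I \ maxSet le I) ∩ Kᶜ = ∅) :
    maxSet (fun a b => le b a) Kᶜ ∩ X = I ∩ Kᶜ := by
  ext x
  constructor
  · intro hx
    obtain ⟨hxM, hxX⟩ := mem_inter.1 hx
    exact mem_inter.2 ⟨hX ▸ subset_idealCl X hxX, maxSet_subset _ hxM⟩
  · intro hx
    obtain ⟨hxI, hxK⟩ := mem_inter.1 hx
    exact mem_inter.2
      ⟨mem_maxSet_swap_of_sdiff_inter_eq_empty (hX ▸ isIdeal_idealCl X) hIK hxI hxK,
        maxSet_subset_of_idealCl_eq hX (mem_maxSet_of_sdiff_inter_eq_empty hIK hxI hxK)⟩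

end Poset

lemma AddChar.map_sum_eq_prod {ι A M : Type*} [AddCommMonoid A] [CommMonoid M]
    (ψ : AddChar A M) (s : Finset ι) (f : ι → A) :
    ψ (∑ i ∈ s, f i) = ∏ i ∈ s, ψ (f i) := by
  induction s using Finset.induction with
  | empty => simp
  | insert a s h ih => rw [sum_insert h, prod_insert h, ψ.map_add_eq_mul, ih]

section Character

variable {F : Type} [Field F] [Fintype F] {χ : AddChar F ℂ}

lemma sum_addChar_mul (hχ : χ.IsPrimitive) (c : F) :
    ∑ x : F, χ (c * x) = if c = 0 then (Fintype.card F : ℂ) else 0 := by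
  simpa only [mul_comm c, Nat.cast_ite, Nat.cast_zero] using AddChar.sum_mulShift c hχ

lemma sum_addChar_mul_erase_zero (hχ : χ.IsPrimitive) (c : F) :
    ∑ x ∈ univ.erase 0, χ (c * x) = if c = 0 then (Fintype.card F : ℂ) - 1 else -1 := by
  rw [← add_sub_cancel_right (∑ x ∈ univ.erase 0, χ (c * x)) (χ (c * 0)),
    sum_erase_add _ _ (mem_univ 0), sum_addChar_mul hχ, mul_zero, AddChar.map_zero_eq_one]
  split_ifs <;> ring

variable {n : ℕ}

lemma mem_supp {v : Fin n → F} {i : Fin n} : i ∈ supp v ↔ v i ≠ 0 := by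
  simp [supp]

lemma sum_piFinset_addChar_dot (t : Fin n → Finset F) (u : Fin n → F) :
    ∑ v ∈ Fintype.piFinset t, χ (dot u v) = ∏ i, ∑ x ∈ t i, χ (u i * x) := by
  rw [prod_univ_sum]
  exact sum_congr rfl fun v _ => χ.map_sum_eq_prod _ _

lemma filter_supp_between_eq_piFinset {A B : Finset (Fin n)} (hAB : A ⊆ B) :
    univ.filter (fun v : Fin n → F => A ⊆ supp v ∧ supp v ⊆ B) =
      Fintype.piFinset fun i =>
        if i ∈ A then univ.erase (0 : F) else if i ∈ B then univ else {0} := by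
  ext v
  simp only [mem_filter, mem_univ, true_and, Fintype.mem_piFinset, subset_iff, mem_supp]
  refine ⟨fun ⟨hA, hB⟩ i => ?_, fun h => ⟨fun i hi => ?_, fun i hi => ?_⟩⟩
  · split_ifs with hiA hiB
    · exact mem_erase.2 ⟨hA hiA, mem_univ _⟩
    · exact mem_univ _
    · exact mem_singleton.2 (not_not.1 (mt (@hB i) hiB))
  · simpa [hi] using h i
  · by_contra hiB
    have hiA : i ∉ A := fun hiA => hiB (hAB hiA)
    simpa [hiA, hiB, hi] using h i

theorem sum_addChar_dot_supp_between (hχ : χ.IsPrimitive) {A B : Finset (Fin n)}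
    (hAB : A ⊆ B) (u : Fin n → F) :
    ∑ v : Fin n → F with A ⊆ supp v ∧ supp v ⊆ B, χ (dot u v) =
      if Disjoint (supp u) (B \ A) then
        ((Fintype.card F : ℂ) - 1) ^ #A * (Fintype.card F : ℂ) ^ #(B \ A) *
          (-1 / ((Fintype.card F : ℂ) - 1)) ^ #(A ∩ supp u)
      else 0 := by
  have hq : (Fintype.card F : ℂ) - 1 ≠ 0 :=
    sub_ne_zero.2 (by exact_mod_cast Fintype.one_lt_card.ne')
  set t : Fin n → Finset F := fun i =>
    if i ∈ A then univ.erase 0 else if i ∈ B then univ else {0}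
  have sum_A : ∀ i ∈ A, ∑ x ∈ t i, χ (u i * x) = ((Fintype.card F : ℂ) - 1) *
      if i ∈ supp u then -1 / ((Fintype.card F : ℂ) - 1) else 1 := by
    intro i hiA
    simp only [t, if_pos hiA, sum_addChar_mul_erase_zero hχ, mem_supp, ne_eq, ite_not]
    split_ifs
    · exact (mul_one _).symm
    · exact (mul_div_cancel₀ _ hq).symm
  have sum_BA : ∀ i ∈ B \ A, ∑ x ∈ t i, χ (u i * x) =
      if u i = 0 then (Fintype.card F : ℂ) else 0 := fun i hi => by
    simp only [t, if_neg (mem_sdiff.1 hi).2, if_pos (mem_sdiff.1 hi).1, sum_addChar_mul hχ]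
  have sum_compl : ∀ i ∉ B, ∑ x ∈ t i, χ (u i * x) = 1 := fun i hiB => by
    have hiA : i ∉ A := fun hiA => hiB (hAB hiA)
    simp [t, hiA, hiB]
  rw [filter_supp_between_eq_piFinset hAB, sum_piFinset_addChar_dot,
    ← prod_subset (subset_univ B) fun i _ => sum_compl i, ← prod_sdiff hAB,
    prod_congr rfl sum_A, prod_mul_distrib, prod_const, prod_ite_mem, prod_const]
  split_ifs with hdisj
  · rw [prod_congr rfl fun i hi => (sum_BA i hi).trans (if_pos ?_), prod_const]
    · ring
    · exact not_not.1 fun hu => disjoint_left.1 hdisj (mem_supp.2 hu) hi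
  · obtain ⟨i, hiu, hiBA⟩ := not_disjoint_iff.1 hdisj
    rw [prod_eq_zero hiBA ((sum_BA i hiBA).trans (if_neg (mem_supp.1 hiu))), zero_mul]

end Character

section Sphere

variable {n : ℕ} {le : Fin n → Fin n → Prop} {F : Type} [Field F] [Fintype F]

lemma sum_sphED_eq_sum_sphD {M : Type*} [AddCommMonoid M]
    (E : Finset (Fin n) → Finset (Fin n) → Prop) (J : Finset (Fin n))
    (f : (Fin n → F) → M) :
    ∑ v ∈ sphED F le E J, f v =
      ∑ K with IsIdeal le K ∧ E K J, ∑ v ∈ sphD F le K, f v := by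
  rw [← sum_biUnion]
  · congr 1
    ext v
    simp [sphED, sphD, and_assoc]
  · intro K _ K' _ hne
    refine disjoint_left.2 fun v hv hv' => hne ?_
    simp only [sphD, mem_filter] at hv hv'
    exact compl_inj_iff.1 (hv.2.symm.trans hv'.2)

variable [IsPartialOrder (Fin n) le]

lemma sphD_eq_filter_supp_between {K : Finset (Fin n)} (hK : IsIdeal le K) :
    sphD F le K =
      univ.filter fun v : Fin n → F =>
        maxSet (fun a b => le b a) Kᶜ ⊆ supp v ∧ supp v ⊆ Kᶜ := by
  ext v
  simp only [sphD, mem_filter, mem_univ, true_and, idealCl_swap_eq_compl_iff hK]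

theorem sum_sphD_addChar_dot {χ : AddChar F ℂ} (hχ : χ.IsPrimitive) {I K : Finset (Fin n)}
    (hK : IsIdeal le K) {u : Fin n → F} (hu : idealCl le (supp u) = I) :
    ∑ v ∈ sphD F le K, χ (dot u v) =
      if (I \ maxSet le I) ∩ Kᶜ = ∅ then
        ((Fintype.card F : ℂ) - 1) ^ #(maxSet (fun a b => le b a) Kᶜ) *
          (Fintype.card F : ℂ) ^ #(Kᶜ \ maxSet (fun a b => le b a) Kᶜ) *
          (-1 / ((Fintype.card F : ℂ) - 1)) ^ #(I ∩ Kᶜ)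
      else 0 := by
  rw [sphD_eq_filter_supp_between hK, sum_addChar_dot_supp_between hχ (maxSet_subset _)]
  simp only [disjoint_sdiff_maxSet_swap_iff hu hK]
  split_ifs with hIK
  · rw [maxSet_swap_inter_eq hu hIK]
  · rfl

end Sphere

theorem stmt_11_general {n : ℕ} (le : Fin n → Fin n → Prop)
    [IsPartialOrder (Fin n) le]
    (E : Finset (Fin n) → Finset (Fin n) → Prop)
    (F : Type) [Field F] [Fintype F] (χ : AddChar F ℂ) (hχ : ∃ a, χ a ≠ 1)
    (I J : Finset (Fin n))
    (hcard : ∀ K : Finset (Fin n), E K J →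
      (maxSet (fun a b => le b a) Kᶜ).card = (maxSet (fun a b => le b a) Jᶜ).card ∧
      (Kᶜ \ maxSet (fun a b => le b a) Kᶜ).card = (Jᶜ \ maxSet (fun a b => le b a) Jᶜ).card) :
    ∀ u ∈ sph F le I,
      ∑ v ∈ sphED F le E J, χ (dot u v) =
        ((Fintype.card F : ℂ) - 1) ^ (maxSet (fun a b => le b a) Jᶜ).card *
          (Fintype.card F : ℂ) ^ (Jᶜ \ maxSet (fun a b => le b a) Jᶜ).card *
          ∑ K ∈ Finset.univ.filter
              (fun K : Finset (Fin n) =>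
                IsIdeal le K ∧ E K J ∧ (I \ maxSet le I) ∩ Kᶜ = ∅),
            ((-1 : ℂ) / ((Fintype.card F : ℂ) - 1)) ^ (I ∩ Kᶜ).card := by
  intro u hu
  have hχ' : χ.IsPrimitive := .of_ne_one (AddChar.ne_one_iff.2 hχ)
  have huI : idealCl le (supp u) = I := (mem_filter.1 hu).2
  rw [sum_sphED_eq_sum_sphD, mul_sum, sum_filter, sum_filter]
  refine sum_congr rfl fun K _ => ?_
  by_cases hKJ : IsIdeal le K ∧ E K J
  · rw [if_pos hKJ, sum_sphD_addChar_dot hχ' hKJ.1 huI, (hcard K hKJ.2).1, (hcard K hKJ.2).2]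
    simp only [hKJ, true_and]
  · rw [if_neg hKJ, if_neg fun h => hKJ ⟨h.1, h.2.1⟩]

/-- Proposition 3.8(i): the entry `p_{J̄^c,Ī}` of the matrix `P_E`. -/
theorem stmt_11 {n : ℕ} (hn : 0 < n) (le : Fin n → Fin n → Prop)
    [IsPartialOrder (Fin n) le]
    (E : Finset (Fin n) → Finset (Fin n) → Prop) (hE : EqvOnIdeals le E)
    (F : Type) [Field F] [Fintype F] (χ : AddChar F ℂ) (hχ : ∃ a, χ a ≠ 1)
    (I J : Finset (Fin n)) (hI : IsIdeal le I) (hJ : IsIdeal le J)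
    (hcard : ∀ K : Finset (Fin n), E K J →
      (maxSet (fun a b => le b a) Kᶜ).card = (maxSet (fun a b => le b a) Jᶜ).card ∧
      (Kᶜ \ maxSet (fun a b => le b a) Kᶜ).card = (Jᶜ \ maxSet (fun a b => le b a) Jᶜ).card) :
    ∀ u ∈ sph F le I,
      ∑ v ∈ sphED F le E J, χ (dot u v) =
        ((Fintype.card F : ℂ) - 1) ^ (maxSet (fun a b => le b a) Jᶜ).card *
          (Fintype.card F : ℂ) ^ (Jᶜ \ maxSet (fun a b => le b a) Jᶜ).card *
          ∑ K ∈ Finset.univ.filter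
              (fun K : Finset (Fin n) =>
                IsIdeal le K ∧ E K J ∧ (I \ maxSet le I) ∩ Kᶜ = ∅),
            ((-1 : ℂ) / ((Fintype.card F : ℂ) - 1)) ^ (I ∩ Kᶜ).card :=
  stmt_11_general le E F χ hχ I J hcard

end
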